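/- arXiv:1107.1896 — 4 statements merged into one kernel-verified Lean document; each statement's English description precedes it below -/
import Mathlib

section
/- In the setting where each π(s) is a linear isometry of X with π(s⁻¹) = π(s)⁻¹, every element of the subspace C₋ = {φ : S → X* : φ(s⁻¹) = −π̄(s⁻¹)φ(s)} is the unique element of minimal norm in its coset modulo C₊ = {ψ : φ(s⁻¹) = π̄(s⁻¹)ψ(s)}; that is, for φ ∈ C₋ and ψ ∈ C₊, ‖φ‖ ≤ ‖φ + ψ‖ in the weighted ℓ_{p*}-norm ‖φ‖ = (∑_s ‖φ(s)‖^{p*} deg(s))^{1/p*}. -/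
open scoped BigOperators

lemma half_pow_mean {a b p : ℝ} (ha : 0 ≤ a) (hb : 0 ≤ b) (hp : 1 ≤ p) :
    ((a + b) / 2) ^ p ≤ (a ^ p + b ^ p) / 2 := by
  have h := Real.rpow_arith_mean_le_arith_mean_rpow Finset.univ ![(1:ℝ)/2, 1/2] ![a, b]
    (by intro i _; fin_cases i <;> norm_num)
    (by simp [Fin.sum_univ_succ]; norm_num)
    (by intro i _; fin_cases i <;> assumption) hp
  have e1 : (a + b) / 2 = (1/2) * a + (1/2) * b := by ring
  have e2 : (a ^ p + b ^ p) / 2 = (1/2) * a ^ p + (1/2) * b ^ p := by ring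
  rw [e1, e2]
  simpa [Fin.sum_univ_succ] using h

/-- Every element `φ` of `C₋ = {φ : S → X* : φ(s⁻¹) = −π̄(s⁻¹)φ(s)}` is of minimal
norm in its coset modulo `C₊ = {ψ : ψ(s⁻¹) = π̄(s⁻¹)ψ(s)}`: for every `ψ ∈ C₊`,
`‖φ‖ ≤ ‖φ + ψ‖` in the weighted `ℓ_{p*}` norm. -/
theorem stmt3 {S : Type*} [Fintype S] {X : Type*} [NormedAddCommGroup X]
    [NormedSpace ℝ X] [CompleteSpace X]
    (inv : S → S) (hinv : ∀ s, inv (inv s) = s)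
    (πbar : S → StrongDual ℝ X ≃ₗᵢ[ℝ] StrongDual ℝ X)
    (hπ : ∀ s, πbar (inv s) = (πbar s).symm)
    (deg : S → ℝ) (hdegpos : ∀ s, 0 < deg s) (hdegsym : ∀ s, deg (inv s) = deg s)
    (pstar : ℝ) (hp : 1 < pstar)
    (φ ψ : S → StrongDual ℝ X)
    (hφ : ∀ s, φ (inv s) = - πbar (inv s) (φ s))
    (hψ : ∀ s, ψ (inv s) = πbar (inv s) (ψ s)) :
    (∑ s : S, ‖φ s‖ ^ pstar * deg s) ^ (1 / pstar)
      ≤ (∑ s : S, ‖φ s + ψ s‖ ^ pstar * deg s) ^ (1 / pstar) := by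
  have hp1 : (1:ℝ) ≤ pstar := hp.le
  -- reindexing identity
  have e : Equiv.Perm S := Function.Involutive.toPerm inv hinv
  have hsub : ∑ s : S, ‖φ s - ψ s‖ ^ pstar * deg s
      = ∑ s : S, ‖φ s + ψ s‖ ^ pstar * deg s := by
    refine Fintype.sum_equiv (Function.Involutive.toPerm inv hinv) _ _ (fun s => ?_)
    have hn : ‖φ (inv s) + ψ (inv s)‖ = ‖φ s - ψ s‖ := by
      rw [hφ s, hψ s]
      have : -(πbar (inv s)) (φ s) + (πbar (inv s)) (ψ s)
          = (πbar (inv s)) (ψ s - φ s) := by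
        rw [map_sub]; abel
      rw [this, LinearIsometryEquiv.norm_map, norm_sub_rev]
    show _ = ‖φ (inv s) + ψ (inv s)‖ ^ pstar * deg (inv s)
    rw [hn, hdegsym]
  -- termwise bound
  have hterm : ∀ s : S, ‖φ s‖ ^ pstar
      ≤ (‖φ s + ψ s‖ ^ pstar + ‖φ s - ψ s‖ ^ pstar) / 2 := by
    intro s
    have h1 : ‖φ s‖ ≤ (‖φ s + ψ s‖ + ‖φ s - ψ s‖) / 2 := by
      have h2 : (2:ℝ) • φ s = (φ s + ψ s) + (φ s - ψ s) := by module
      have h3 : 2 * ‖φ s‖ ≤ ‖φ s + ψ s‖ + ‖φ s - ψ s‖ := by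
        calc 2 * ‖φ s‖ = ‖(2:ℝ) • φ s‖ := by rw [norm_smul]; simp
          _ = ‖(φ s + ψ s) + (φ s - ψ s)‖ := by rw [h2]
          _ ≤ ‖φ s + ψ s‖ + ‖φ s - ψ s‖ := norm_add_le _ _
      linarith
    calc ‖φ s‖ ^ pstar ≤ ((‖φ s + ψ s‖ + ‖φ s - ψ s‖) / 2) ^ pstar :=
          Real.rpow_le_rpow (norm_nonneg _) h1 (by linarith)
      _ ≤ (‖φ s + ψ s‖ ^ pstar + ‖φ s - ψ s‖ ^ pstar) / 2 :=
          half_pow_mean (norm_nonneg _) (norm_nonneg _) hp1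
  have hsum : ∑ s : S, ‖φ s‖ ^ pstar * deg s
      ≤ ∑ s : S, ‖φ s + ψ s‖ ^ pstar * deg s := by
    calc ∑ s : S, ‖φ s‖ ^ pstar * deg s
        ≤ ∑ s : S, (‖φ s + ψ s‖ ^ pstar + ‖φ s - ψ s‖ ^ pstar) / 2 * deg s := by
          refine Finset.sum_le_sum (fun s _ => ?_)
          exact mul_le_mul_of_nonneg_right (hterm s) (hdegpos s).le
      _ = (∑ s : S, ‖φ s + ψ s‖ ^ pstar * deg s
            + ∑ s : S, ‖φ s - ψ s‖ ^ pstar * deg s) / 2 := by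
          rw [← Finset.sum_add_distrib, Finset.sum_div]
          refine Finset.sum_congr rfl (fun s _ => ?_); ring
      _ = ∑ s : S, ‖φ s + ψ s‖ ^ pstar * deg s := by rw [hsub]; ring
  apply Real.rpow_le_rpow _ hsum (by positivity)
  refine Finset.sum_nonneg (fun s _ => ?_)
  exact mul_nonneg (Real.rpow_nonneg (norm_nonneg _) _) (hdegpos s).le
end

section
/- Let φ : S → X* satisfy φ(s⁻¹) = −π̄(s⁻¹)φ(s) for all s ∈ S, where π̄ is the adjoint representation of an isometric representation π of G on X. Then for every v ∈ X, ∑_{s∈S} ⟨v − π(s)v, φ(s)⟩ deg_ω(s) = ⟨v, 2∑_{s∈S} φ(s) deg_ω(s)⟩; that is, the adjoint of δ on C₋ is given by δ*φ = (2/ω(E)) ∑_{s∈S} φ(s) deg_ω(s) with respect to the pairing ⟨v,w⟩₀ = ω(E)⟨v,w⟩. -/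
open scoped BigOperators

variable {G : Type*} [Group G] [DecidableEq G]

/-- The weighted degree `deg_ω(s) = ∑_{t ∼ s} ω(s,t)` in the link graph. -/
noncomputable def degw (S : Finset G) (ω : G × G → ℝ) (s : G) : ℝ :=
  ∑ t ∈ S.filter (fun t => s⁻¹ * t ∈ S), ω (s, t)

/-- For `φ : S → X*` with `φ(s⁻¹) = −π̄(s⁻¹)φ(s)` (where `π̄` is the adjoint of
the isometric representation `π`, so that `φ(s⁻¹)(v) = −φ(s)(π(s)v)`), the
adjoint of `δ` is given by `δ*φ = (2/ω(E)) ∑_s φ(s) deg_ω(s)`: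
`∑_s ⟨v − π(s)v, φ(s)⟩ deg_ω(s) = ⟨v, 2 ∑_s φ(s) deg_ω(s)⟩` for all `v`. -/
theorem stmt9 {X : Type*} [NormedAddCommGroup X] [NormedSpace ℝ X] [CompleteSpace X]
    (S : Finset G) (hSsym : ∀ s ∈ S, s⁻¹ ∈ S) (hSid : (1:G) ∉ S)
    (ω : G × G → ℝ)
    (hωpos : ∀ s ∈ S, ∀ t ∈ S, s⁻¹ * t ∈ S → 0 < ω (s, t))
    (hωsym : ∀ s t : G, ω (s, t) = ω (t, s))
    (hdeg1 : ∀ s ∈ S, degw S ω s = degw S ω s⁻¹)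
    (hdeg2 : ∀ r ∈ S, degw S ω r =
      ∑ e ∈ (S ×ˢ S).filter (fun e => e.1⁻¹ * e.2 = r), ω e)
    (π : G →* (X ≃ₗᵢ[ℝ] X))
    (φ : G → StrongDual ℝ X)
    (hφ : ∀ s ∈ S, ∀ v : X, φ s⁻¹ v = - φ s (π s v)) :
    ∀ v : X, ∑ s ∈ S, φ s (v - π s v) * degw S ω s
      = 2 * ∑ s ∈ S, φ s v * degw S ω s := by
  intro v
  have key : ∑ s ∈ S, φ s v * degw S ω s
      = ∑ s ∈ S, (- φ s (π s v)) * degw S ω s := by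
    exact (Finset.sum_nbij' (fun s => s⁻¹) (fun s => s⁻¹)
      (fun s hs => hSsym s hs) (fun s hs => hSsym s hs)
      (fun s _ => inv_inv s) (fun s _ => inv_inv s)
      (fun s hs => by
        show - φ s (π s v) * degw S ω s = φ s⁻¹ v * degw S ω s⁻¹
        rw [hφ s hs v, ← hdeg1 s hs])).symm
  have hsum : ∀ s ∈ S, φ s (v - π s v) * degw S ω s
      = φ s v * degw S ω s + (- φ s (π s v)) * degw S ω s := by
    intro s hs
    rw [map_sub]
    ring
  rw [Finset.sum_congr rfl hsum, Finset.sum_add_distrib, ← key]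
  ring
end

section
/- Let Γ = (V,E) be a finite weighted graph and suppose the real-valued p-Poincaré inequality ∑_{x∈V} |f(x) − Qf|^p deg_ω(x) ≤ κ^p ∑_{x∼y} |f(x) − f(y)|^p ω(x,y) holds for all f : V → ℝ. Then for any measure space (Y,μ), the same inequality with the same constant κ holds for all functions f : V → L_p(Y,μ), with absolute values replaced by L_p-norms. -/
open scoped BigOperators

variable {V : Type*} [Fintype V]

/-- The weighted degree `deg_ω(x) = ∑_{y ∼ x} ω(x,y)` of a vertex of a weighted
graph. -/
noncomputable def degV (Gr : SimpleGraph V) [DecidableRel Gr.Adj]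
    (ω : V → V → ℝ) (x : V) : ℝ :=
  ∑ y ∈ Gr.neighborFinset x, ω x y

open MeasureTheory

lemma myNormPow {Y : Type*} [MeasurableSpace Y] {μ : Measure Y}
    {p : ℝ} (hp : 1 ≤ p) [Fact (1 ≤ ENNReal.ofReal p)]
    (h : Lp ℝ (ENNReal.ofReal p) μ) :
    ‖h‖ ^ p = ∫ y, ‖h y‖ ^ p ∂μ := by
  have hp0 : 0 < p := lt_of_lt_of_le one_pos hp
  have hne : ENNReal.ofReal p ≠ 0 := by
    simp only [ne_eq, ENNReal.ofReal_eq_zero, not_le]; linarith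
  have htop : ENNReal.ofReal p ≠ ⊤ := ENNReal.ofReal_ne_top
  have hI : 0 ≤ ∫ y, ‖h y‖ ^ p ∂μ := by
    apply integral_nonneg; intro y; positivity
  rw [Lp.norm_def, (Lp.memLp h).eLpNorm_eq_integral_rpow_norm hne htop,
    ENNReal.toReal_ofReal hp0.le]
  rw [ENNReal.toReal_ofReal (by positivity), Real.rpow_inv_rpow hI hp0.ne']

lemma myIntPow {Y : Type*} [MeasurableSpace Y] {μ : Measure Y}
    {p : ℝ} (hp : 1 ≤ p) [Fact (1 ≤ ENNReal.ofReal p)]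
    (h : Lp ℝ (ENNReal.ofReal p) μ) :
    Integrable (fun y => ‖h y‖ ^ p) μ := by
  have hp0 : 0 < p := lt_of_lt_of_le one_pos hp
  have hne : ENNReal.ofReal p ≠ 0 := by
    simp only [ne_eq, ENNReal.ofReal_eq_zero, not_le]; linarith
  have := (Lp.memLp h).integrable_norm_rpow hne ENNReal.ofReal_ne_top
  rwa [ENNReal.toReal_ofReal hp0.le] at this

lemma myCoeSum {Y : Type*} [MeasurableSpace Y] {μ : Measure Y}
    {α : Type*} {q : ENNReal} [Fact (1 ≤ q)] (s : Finset α)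
    (g : α → Lp ℝ q μ) :
    ⇑(∑ i ∈ s, g i) =ᵐ[μ] fun y => ∑ i ∈ s, (g i : Y → ℝ) y := by
  classical
  induction s using Finset.induction_on with
  | empty => simpa [Pi.zero_def] using Lp.coeFn_zero ℝ q μ
  | @insert a s hn ih =>
    rw [Finset.sum_insert hn]
    filter_upwards [Lp.coeFn_add (g a) (∑ i ∈ s, g i), ih] with y h1 h2
    rw [h1, Pi.add_apply, h2, Finset.sum_insert hn]


/-- If the scalar `p`-Poincaré inequality with constant `κ` holds on a finite
weighted graph, then the same inequality, with the same constant, holds for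
functions with values in `L_p(Y,μ)`, for any measure space `(Y,μ)`. -/
theorem stmt12 (Gr : SimpleGraph V) [DecidableRel Gr.Adj]
    (ω : V → V → ℝ) (hωsym : ∀ x y, ω x y = ω y x)
    (hωpos : ∀ x y, Gr.Adj x y → 0 < ω x y)
    (p : ℝ) (hp : 1 ≤ p) [Fact (1 ≤ ENNReal.ofReal p)] (κ : ℝ)
    (hscalar : ∀ g : V → ℝ,
      ∑ x : V, |g x - ((∑ z : V, degV Gr ω z)⁻¹) * ∑ z : V, degV Gr ω z * g z| ^ p
          * degV Gr ω x
        ≤ κ ^ p * ∑ x : V, ∑ y ∈ Gr.neighborFinset x, |g x - g y| ^ p * ω x y)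
    {Y : Type*} [MeasurableSpace Y] (μ : MeasureTheory.Measure Y) :
    ∀ f : V → MeasureTheory.Lp ℝ (ENNReal.ofReal p) μ,
      ∑ x : V, ‖f x - ((∑ z : V, degV Gr ω z)⁻¹) •
          ∑ z : V, degV Gr ω z • f z‖ ^ p * degV Gr ω x
        ≤ κ ^ p * ∑ x : V, ∑ y ∈ Gr.neighborFinset x, ‖f x - f y‖ ^ p * ω x y := by
  intro f
  classical
  set D : ℝ := ∑ z : V, degV Gr ω z with hD
  set c : Lp ℝ (ENNReal.ofReal p) μ := D⁻¹ • ∑ z : V, degV Gr ω z • f z with hc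
  -- a.e. pointwise descriptions
  have hae : ∀ᵐ y ∂μ,
      (∀ x : V, ((f x - c : Lp ℝ (ENNReal.ofReal p) μ) : Y → ℝ) y
          = (f x : Y → ℝ) y - D⁻¹ * ∑ z : V, degV Gr ω z * (f z : Y → ℝ) y)
      ∧ (∀ x x' : V, ((f x - f x' : Lp ℝ (ENNReal.ofReal p) μ) : Y → ℝ) y
          = (f x : Y → ℝ) y - (f x' : Y → ℝ) y) := by
    have h1 := myCoeSum (μ := μ) Finset.univ (fun z => degV Gr ω z • f z)
    have h2 : ∀ᵐ y ∂μ, ∀ z : V,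
        ((degV Gr ω z • f z : Lp ℝ (ENNReal.ofReal p) μ) : Y → ℝ) y
          = degV Gr ω z * (f z : Y → ℝ) y := by
      rw [MeasureTheory.ae_all_iff]
      intro z
      filter_upwards [Lp.coeFn_smul (degV Gr ω z) (f z)] with y hy
      simpa using hy
    have h3 := Lp.coeFn_smul D⁻¹ (∑ z : V, degV Gr ω z • f z)
    have h4 : ∀ᵐ y ∂μ, ∀ x : V,
        ((f x - c : Lp ℝ (ENNReal.ofReal p) μ) : Y → ℝ) y
          = (f x : Y → ℝ) y - (c : Y → ℝ) y := by
      rw [MeasureTheory.ae_all_iff]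
      intro x
      filter_upwards [Lp.coeFn_sub (f x) c] with y hy
      simpa using hy
    have h5 : ∀ᵐ y ∂μ, ∀ x x' : V,
        ((f x - f x' : Lp ℝ (ENNReal.ofReal p) μ) : Y → ℝ) y
          = (f x : Y → ℝ) y - (f x' : Y → ℝ) y := by
      rw [MeasureTheory.ae_all_iff]
      intro x
      rw [MeasureTheory.ae_all_iff]
      intro x'
      filter_upwards [Lp.coeFn_sub (f x) (f x')] with y hy
      simpa using hy
    filter_upwards [h1, h2, h3, h4, h5] with y hy1 hy2 hy3 hy4 hy5
    refine ⟨fun x => ?_, hy5⟩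
    rw [hy4 x, hc, hy3, Pi.smul_apply, smul_eq_mul, hy1]
    congr 2
    exact Finset.sum_congr rfl fun z _ => hy2 z
  -- integrability
  have hintL : ∀ x : V, Integrable
      (fun y => ‖((f x - c : Lp ℝ (ENNReal.ofReal p) μ) : Y → ℝ) y‖ ^ p * degV Gr ω x) μ :=
    fun x => (myIntPow hp (f x - c)).mul_const _
  have hintR : ∀ x x' : V, Integrable
      (fun y => ‖((f x - f x' : Lp ℝ (ENNReal.ofReal p) μ) : Y → ℝ) y‖ ^ p * ω x x') μ :=
    fun x x' => (myIntPow hp (f x - f x')).mul_const _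
  -- rewrite LHS as an integral
  have hL : ∑ x : V, ‖f x - c‖ ^ p * degV Gr ω x
      = ∫ y, ∑ x : V, ‖((f x - c : Lp ℝ (ENNReal.ofReal p) μ) : Y → ℝ) y‖ ^ p
          * degV Gr ω x ∂μ := by
    rw [integral_finset_sum _ (fun x _ => hintL x)]
    refine Finset.sum_congr rfl fun x _ => ?_
    rw [myNormPow hp (f x - c), ← integral_mul_const]
  have hR : κ ^ p * ∑ x : V, ∑ x' ∈ Gr.neighborFinset x, ‖f x - f x'‖ ^ p * ω x x'
      = ∫ y, κ ^ p * ∑ x : V, ∑ x' ∈ Gr.neighborFinset x,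
          ‖((f x - f x' : Lp ℝ (ENNReal.ofReal p) μ) : Y → ℝ) y‖ ^ p * ω x x' ∂μ := by
    rw [integral_const_mul]
    congr 1
    rw [integral_finset_sum _ (fun x _ => integrable_finset_sum _ (fun x' _ => hintR x x'))]
    refine Finset.sum_congr rfl fun x _ => ?_
    rw [integral_finset_sum _ (fun x' _ => hintR x x')]
    refine Finset.sum_congr rfl fun x' _ => ?_
    rw [myNormPow hp (f x - f x'), ← integral_mul_const]
  rw [hL, hR]
  refine integral_mono_ae (integrable_finset_sum _ (fun x _ => hintL x))
    ((integrable_finset_sum _ (fun x _ => integrable_finset_sum _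
      (fun x' _ => hintR x x'))).const_mul _) ?_
  filter_upwards [hae] with y ⟨hy1, hy2⟩
  have := hscalar (fun x => (f x : Y → ℝ) y)
  calc ∑ x : V, ‖((f x - c : Lp ℝ (ENNReal.ofReal p) μ) : Y → ℝ) y‖ ^ p * degV Gr ω x
      = ∑ x : V, |(f x : Y → ℝ) y - D⁻¹ * ∑ z : V, degV Gr ω z * (f z : Y → ℝ) y| ^ p
          * degV Gr ω x := by
        refine Finset.sum_congr rfl fun x _ => ?_
        rw [hy1 x, Real.norm_eq_abs]
    _ ≤ κ ^ p * ∑ x : V, ∑ x' ∈ Gr.neighborFinset x,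
          |(f x : Y → ℝ) y - (f x' : Y → ℝ) y| ^ p * ω x x' := this
    _ = κ ^ p * ∑ x : V, ∑ x' ∈ Gr.neighborFinset x,
          ‖((f x - f x' : Lp ℝ (ENNReal.ofReal p) μ) : Y → ℝ) y‖ ^ p * ω x x' := by
        congr 1
        refine Finset.sum_congr rfl fun x _ => Finset.sum_congr rfl fun x' _ => ?_
        rw [hy2 x x', Real.norm_eq_abs]
end

section
/- Suppose the link graph L(S) with admissible weight ω satisfies the p*-Poincaré inequality over X* with constant κ = κ_{p*}(S, X*). Then for every φ : S → X* satisfying both φ(s⁻¹) = −π̄(s⁻¹)φ(s) and the cocycle-kernel condition π̄(s)φ(s⁻¹t) = φ(t) − φ(s) for all (s,t) ∈ E, the inequality 2(1 − 2^{−1/p*} κ) ‖φ‖_{(1,p*)} ≤ ‖δ*φ‖_{(0,p*)} holds, where δ*φ = 2∑_s φ(s)deg_ω(s)/ω(E), ‖φ‖_{(1,p*)} = (∑_s ‖φ(s)‖^{p*}deg_ω(s))^{1/p*} and ‖w‖_{(0,p*)} = ω(E)^{1/p*}‖w‖. -/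
open scoped BigOperators

variable {G : Type*} [Group G] [DecidableEq G]

/-- If the link graph `L(S)` satisfies the `p*`-Poincaré inequality over `X*`
with constant `κ` (sum over unordered edges; the set `E` of ordered edges counts
each edge twice), then for every `φ ∈ C₋ ∩ ker d̄` we have
`2(1 − 2^{−1/p*} κ) ‖φ‖_{(1,p*)} ≤ ‖δ*φ‖_{(0,p*)}`, where
`δ*φ = 2 ∑_s φ(s) deg_ω(s)/ω(E)`, `ω(E) = ∑_s deg_ω(s)` and
`‖w‖_{(0,p*)} = ω(E)^{1/p*} ‖w‖`. -/
theorem stmt15 {X : Type*} [NormedAddCommGroup X] [NormedSpace ℝ X] [CompleteSpace X]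
    (S : Finset G) (hSsym : ∀ s ∈ S, s⁻¹ ∈ S) (hSid : (1:G) ∉ S)
    (ω : G × G → ℝ)
    (hωpos : ∀ s ∈ S, ∀ t ∈ S, s⁻¹ * t ∈ S → 0 < ω (s, t))
    (hωsym : ∀ s t : G, ω (s, t) = ω (t, s))
    (hdeg1 : ∀ s ∈ S, degw S ω s = degw S ω s⁻¹)
    (hdeg2 : ∀ r ∈ S, degw S ω r =
      ∑ e ∈ (S ×ˢ S).filter (fun e => e.1⁻¹ * e.2 = r), ω e)
    (π : G →* (X ≃ₗᵢ[ℝ] X))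
    (pstar : ℝ) (hp : 1 < pstar) (κ : ℝ) (hκ : 0 ≤ κ)
    (hPoincare : ∀ ψ : G → StrongDual ℝ X,
      ∑ s ∈ S, ‖ψ s - ((∑ t ∈ S, degw S ω t)⁻¹) •
          ∑ t ∈ S, degw S ω t • ψ t‖ ^ pstar * degw S ω s
        ≤ κ ^ pstar * (2⁻¹ *
            ∑ e ∈ (S ×ˢ S).filter (fun e => e.1⁻¹ * e.2 ∈ S),
              ‖ψ e.1 - ψ e.2‖ ^ pstar * ω e))
    (φ : G → StrongDual ℝ X)
    (hφminus : ∀ s ∈ S, ∀ v : X, φ s⁻¹ v = - φ s (π s v))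
    (hφker : ∀ s ∈ S, ∀ t ∈ S, s⁻¹ * t ∈ S → ∀ v : X,
      φ (s⁻¹ * t) (π s⁻¹ v) = φ t v - φ s v) :
    2 * (1 - (2:ℝ) ^ (-(1 / pstar)) * κ) *
        (∑ s ∈ S, ‖φ s‖ ^ pstar * degw S ω s) ^ (1 / pstar)
      ≤ (∑ s ∈ S, degw S ω s) ^ (1 / pstar) *
          ‖(2:ℝ) • (((∑ t ∈ S, degw S ω t)⁻¹) • ∑ t ∈ S, degw S ω t • φ t)‖ := by
  classical
  have hp0 : (0:ℝ) < pstar := lt_trans one_pos hp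
  have hp1 : (1:ℝ) ≤ pstar := le_of_lt hp
  have hpne : pstar ≠ 0 := ne_of_gt hp0
  set M : StrongDual ℝ X :=
    ((∑ t ∈ S, degw S ω t)⁻¹) • ∑ t ∈ S, degw S ω t • φ t with hM
  set D : ℝ := ∑ s ∈ S, degw S ω s with hD
  have hdegnn : ∀ s ∈ S, 0 ≤ degw S ω s := by
    intro s hs
    refine Finset.sum_nonneg ?_
    intro t ht
    simp only [Finset.mem_filter] at ht
    exact le_of_lt (hωpos s hs t ht.1 ht.2)
  have hDnn : 0 ≤ D := Finset.sum_nonneg (fun s hs => hdegnn s hs)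
  set SA : ℝ := ∑ s ∈ S, ‖φ s - M‖ ^ pstar * degw S ω s with hSA
  set SB : ℝ := ∑ s ∈ S, ‖φ s‖ ^ pstar * degw S ω s with hSB
  have hSAnn : 0 ≤ SA := Finset.sum_nonneg fun s hs =>
    mul_nonneg (Real.rpow_nonneg (norm_nonneg _) _) (hdegnn s hs)
  have hSBnn : 0 ≤ SB := Finset.sum_nonneg fun s hs =>
    mul_nonneg (Real.rpow_nonneg (norm_nonneg _) _) (hdegnn s hs)
  -- edge norm identity
  have hedge : ∀ e ∈ (S ×ˢ S).filter (fun e => e.1⁻¹ * e.2 ∈ S),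
      ‖φ e.1 - φ e.2‖ = ‖φ (e.1⁻¹ * e.2)‖ := by
    intro e he
    simp only [Finset.mem_filter, Finset.mem_product] at he
    obtain ⟨⟨hs, ht⟩, hr⟩ := he
    have hfun : φ e.1 - φ e.2 =
        -((φ (e.1⁻¹ * e.2)).comp
          (π (e.1⁻¹)).toLinearIsometry.toContinuousLinearMap) := by
      ext v
      have h := hφker e.1 hs e.2 ht hr v
      simp only [ContinuousLinearMap.sub_apply, ContinuousLinearMap.neg_apply,
        ContinuousLinearMap.coe_comp', Function.comp_apply,
        LinearIsometry.coe_toContinuousLinearMap,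
        LinearIsometryEquiv.coe_toLinearIsometry]
      rw [h]; ring
    rw [hfun, norm_neg]
    exact ContinuousLinearMap.opNorm_comp_linearIsometryEquiv (φ (e.1⁻¹ * e.2)) (π (e.1⁻¹))
  -- edge sum equals SB
  have hEsum : ∑ e ∈ (S ×ˢ S).filter (fun e => e.1⁻¹ * e.2 ∈ S),
      ‖φ e.1 - φ e.2‖ ^ pstar * ω e = SB := by
    have h1 : ∑ e ∈ (S ×ˢ S).filter (fun e => e.1⁻¹ * e.2 ∈ S),
        ‖φ e.1 - φ e.2‖ ^ pstar * ω e
        = ∑ e ∈ (S ×ˢ S).filter (fun e => e.1⁻¹ * e.2 ∈ S),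
            ‖φ (e.1⁻¹ * e.2)‖ ^ pstar * ω e :=
      Finset.sum_congr rfl fun e he => by rw [hedge e he]
    rw [h1]
    have h2 := Finset.sum_fiberwise_of_maps_to
      (s := (S ×ˢ S).filter (fun e => e.1⁻¹ * e.2 ∈ S)) (t := S)
      (g := fun e : G × G => e.1⁻¹ * e.2)
      (fun e he => (Finset.mem_filter.1 he).2)
      (fun e : G × G => ‖φ (e.1⁻¹ * e.2)‖ ^ pstar * ω e)
    rw [← h2, hSB]
    refine Finset.sum_congr rfl fun r hr => ?_
    have hfe : ((S ×ˢ S).filter (fun e => e.1⁻¹ * e.2 ∈ S)).filter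
          (fun e => e.1⁻¹ * e.2 = r)
        = (S ×ˢ S).filter (fun e => e.1⁻¹ * e.2 = r) := by
      rw [Finset.filter_filter]
      refine Finset.filter_congr fun e he => ?_
      constructor
      · exact fun h => h.2
      · exact fun h => ⟨h ▸ hr, h⟩
    rw [hfe]
    have h3 : ∑ e ∈ (S ×ˢ S).filter (fun e => e.1⁻¹ * e.2 = r),
        ‖φ (e.1⁻¹ * e.2)‖ ^ pstar * ω e
        = ‖φ r‖ ^ pstar * ∑ e ∈ (S ×ˢ S).filter (fun e => e.1⁻¹ * e.2 = r), ω e := by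
      rw [Finset.mul_sum]
      refine Finset.sum_congr rfl fun e he => ?_
      rw [(Finset.mem_filter.1 he).2]
    rw [h3, ← hdeg2 r hr]
  -- Poincaré
  have hP : SA ≤ κ ^ pstar * (2⁻¹ * SB) := by
    have h := hPoincare φ
    rw [hEsum] at h
    exact h
  have hAB : SA ^ (1/pstar) ≤ κ * (2:ℝ) ^ (-(1/pstar)) * SB ^ (1/pstar) := by
    have h := Real.rpow_le_rpow (z := 1/pstar) hSAnn hP (by positivity)
    refine h.trans_eq ?_
    rw [Real.mul_rpow (Real.rpow_nonneg hκ _) (mul_nonneg (by norm_num) hSBnn),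
      Real.mul_rpow (by norm_num : (0:ℝ) ≤ 2⁻¹) hSBnn,
      ← Real.rpow_mul hκ, mul_one_div, div_self hpne, Real.rpow_one]
    have h2 : ((2:ℝ)⁻¹) ^ (1/pstar) = (2:ℝ) ^ (-(1/pstar)) := by
      rw [← Real.rpow_neg_one, ← Real.rpow_mul (by norm_num : (0:ℝ) ≤ 2)]
      norm_num
    rw [h2, mul_assoc]
  -- Minkowski
  have hMink : SB ^ (1/pstar) ≤ SA ^ (1/pstar) + ‖M‖ * D ^ (1/pstar) := by
    set f : G → ℝ := fun s => ‖φ s - M‖ * (degw S ω s) ^ (1/pstar) with hfdef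
    set g : G → ℝ := fun s => ‖M‖ * (degw S ω s) ^ (1/pstar) with hgdef
    have key := Real.Lp_add_le S f g hp1
    have hSBle : SB ≤ ∑ s ∈ S, |f s + g s| ^ pstar := by
      rw [hSB]
      refine Finset.sum_le_sum fun s hs => ?_
      have hd := hdegnn s hs
      have hdp : (0:ℝ) ≤ (degw S ω s) ^ (1/pstar) := Real.rpow_nonneg hd _
      have e1 : ‖φ s‖ ^ pstar * degw S ω s
          = (‖φ s‖ * (degw S ω s) ^ (1/pstar)) ^ pstar := by
        rw [Real.mul_rpow (norm_nonneg _) hdp, ← Real.rpow_mul hd, one_div,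
          inv_mul_cancel₀ hpne, Real.rpow_one]
      rw [e1]
      refine Real.rpow_le_rpow (mul_nonneg (norm_nonneg _) hdp) ?_ hp0.le
      refine le_trans ?_ (le_abs_self _)
      have htri : ‖φ s‖ ≤ ‖φ s - M‖ + ‖M‖ := by
        calc ‖φ s‖ = ‖(φ s - M) + M‖ := by rw [sub_add_cancel]
          _ ≤ ‖φ s - M‖ + ‖M‖ := norm_add_le _ _
      calc ‖φ s‖ * (degw S ω s) ^ (1/pstar)
          ≤ (‖φ s - M‖ + ‖M‖) * (degw S ω s) ^ (1/pstar) :=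
            mul_le_mul_of_nonneg_right htri hdp
        _ = f s + g s := by rw [add_mul]
    have hfA : ∑ s ∈ S, |f s| ^ pstar = SA := by
      rw [hSA]
      refine Finset.sum_congr rfl fun s hs => ?_
      have hd := hdegnn s hs
      have hdp : (0:ℝ) ≤ (degw S ω s) ^ (1/pstar) := Real.rpow_nonneg hd _
      rw [abs_of_nonneg (mul_nonneg (norm_nonneg _) hdp),
        Real.mul_rpow (norm_nonneg _) hdp, ← Real.rpow_mul hd, one_div,
        inv_mul_cancel₀ hpne, Real.rpow_one]
    have hgD : ∑ s ∈ S, |g s| ^ pstar = ‖M‖ ^ pstar * D := by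
      rw [hD, Finset.mul_sum]
      refine Finset.sum_congr rfl fun s hs => ?_
      have hd := hdegnn s hs
      have hdp : (0:ℝ) ≤ (degw S ω s) ^ (1/pstar) := Real.rpow_nonneg hd _
      rw [abs_of_nonneg (mul_nonneg (norm_nonneg _) hdp),
        Real.mul_rpow (norm_nonneg _) hdp, ← Real.rpow_mul hd, one_div,
        inv_mul_cancel₀ hpne, Real.rpow_one]
    have hgD' : (∑ s ∈ S, |g s| ^ pstar) ^ (1/pstar) = ‖M‖ * D ^ (1/pstar) := by
      rw [hgD, Real.mul_rpow (Real.rpow_nonneg (norm_nonneg _) _) hDnn,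
        ← Real.rpow_mul (norm_nonneg _), mul_one_div, div_self hpne, Real.rpow_one]
    calc SB ^ (1/pstar) ≤ (∑ s ∈ S, |f s + g s| ^ pstar) ^ (1/pstar) :=
          Real.rpow_le_rpow hSBnn hSBle (by positivity)
      _ ≤ (∑ s ∈ S, |f s| ^ pstar) ^ (1/pstar)
            + (∑ s ∈ S, |g s| ^ pstar) ^ (1/pstar) := key
      _ = SA ^ (1/pstar) + ‖M‖ * D ^ (1/pstar) := by rw [hfA, hgD']
  -- conclude
  have hfin : SB ^ (1/pstar)
      ≤ κ * (2:ℝ) ^ (-(1/pstar)) * SB ^ (1/pstar) + ‖M‖ * D ^ (1/pstar) :=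
    hMink.trans (add_le_add hAB le_rfl)
  rw [norm_smul]
  have h2n : ‖(2:ℝ)‖ = 2 := by norm_num
  rw [h2n]
  nlinarith [hfin, Real.rpow_nonneg hSBnn (1/pstar), Real.rpow_nonneg hDnn (1/pstar),
    norm_nonneg M]
end
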